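/- For every election (n, X₁,…,Xₙ, Y, β) in Banach spaces, the space (𝓛^β(X₁,…,Xₙ)⊗Y, ε_β) embeds isometrically, via the evaluation morphism, into the dual space (X₁⊗⋯⊗Xₙ⊗Y*, π^β)*; equivalently, ε_β is dual to π^β in the sense of relation (𝓛^β(E₁,…,Eₙ)⊗F, ε_{β}) = (E₁⊗⋯⊗Eₙ⊗F*, π^{β})* on finite-dimensional spaces. -/

import Mathlib

/- Common framework: Σ-operators, reasonable crossnorms, Σ-ideals and Σ-tensor norms,
following S. García-Hernández, "The duality between ideals of multilinear operators
and tensor norms". -/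

open scoped TensorProduct
open PiTensorProduct

universe u

noncomputable section

/-- The Segre cone: the set of decomposable (elementary) tensors in `⨂ᵢ Xᵢ`. -/
def Segre (𝕜 : Type u) [RCLike 𝕜] {ι : Type} [Fintype ι] (X : ι → Type u)
    [∀ i, NormedAddCommGroup (X i)] [∀ i, NormedSpace 𝕜 (X i)] :
    Set (⨂[𝕜] i, X i) :=
  {u | ∃ x : (i : ι) → X i, u = ⨂ₜ[𝕜] i, x i}



/-- The set of values `|x₁*⊗⋯⊗xₙ*(u)|` over functionals `xᵢ* ∈ B_{Xᵢ*}`. -/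
def epsSet {𝕜 : Type u} [RCLike 𝕜] {ι : Type} [Fintype ι] {X : ι → Type u}
    [∀ i, NormedAddCommGroup (X i)] [∀ i, NormedSpace 𝕜 (X i)]
    (u : ⨂[𝕜] i, X i) : Set ℝ :=
  {r | ∃ f : ∀ i, X i →L[𝕜] 𝕜, (∀ i, ‖f i‖ ≤ 1) ∧
    r = ‖PiTensorProduct.lift
      ((ContinuousMultilinearMap.mkPiAlgebra 𝕜 ι 𝕜).compContinuousLinearMap
        f).toMultilinearMap u‖}

/-- The classical injective tensor norm
`ε(u) = sup { |x₁*⊗⋯⊗xₙ*(u)| : xᵢ* ∈ B_{Xᵢ*} }`. -/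
def epsSeminorm (𝕜 : Type u) [RCLike 𝕜] {ι : Type} [Fintype ι] (X : ι → Type u)
    [∀ i, NormedAddCommGroup (X i)] [∀ i, NormedSpace 𝕜 (X i)] :
    (⨂[𝕜] i, X i) → ℝ := fun u => sSup (epsSet u)

section EpsLemmas

variable {𝕜 : Type u} [RCLike 𝕜] {ι : Type} [Fintype ι] [Nonempty ι] {X : ι → Type u}
    [∀ i, NormedAddCommGroup (X i)] [∀ i, NormedSpace 𝕜 (X i)]

theorem epsSet_le (u : ⨂[𝕜] i, X i) : ∀ r ∈ epsSet u, r ≤ projectiveSeminorm u := by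
  rintro r ⟨f, hf, rfl⟩
  refine (norm_eval_le_projectiveSeminorm _ u).trans ?_
  rw [mul_comm]
  calc projectiveSeminorm u *
        ‖(ContinuousMultilinearMap.mkPiAlgebra 𝕜 ι 𝕜).compContinuousLinearMap f‖
      ≤ projectiveSeminorm u * 1 := by
        refine mul_le_mul_of_nonneg_left ?_ (apply_nonneg _ u)
        refine (ContinuousMultilinearMap.norm_compContinuousLinearMap_le _ _).trans ?_
        exact mul_le_one₀ ContinuousMultilinearMap.norm_mkPiAlgebra_le
          (Finset.prod_nonneg fun i _ => norm_nonneg _)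
          (Finset.prod_le_one (fun i _ => norm_nonneg _) (fun i _ => hf i))
    _ = projectiveSeminorm u := mul_one _

theorem epsSet_bdd (u : ⨂[𝕜] i, X i) : BddAbove (epsSet u) :=
  ⟨projectiveSeminorm u, fun r hr => epsSet_le u r hr⟩

theorem epsSeminorm_nonneg (u : ⨂[𝕜] i, X i) : 0 ≤ epsSeminorm 𝕜 X u :=
  Real.sSup_nonneg (by rintro r ⟨f, hf, rfl⟩; exact norm_nonneg _)

theorem epsSeminorm_le_projectiveSeminorm (u : ⨂[𝕜] i, X i) :
    epsSeminorm 𝕜 X u ≤ projectiveSeminorm u :=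
  Real.sSup_le (epsSet_le u) (apply_nonneg projectiveSeminorm u)

theorem epsSeminorm_add_le (u v : ⨂[𝕜] i, X i) :
    epsSeminorm 𝕜 X (u + v) ≤ epsSeminorm 𝕜 X u + epsSeminorm 𝕜 X v := by
  refine Real.sSup_le ?_ (add_nonneg (epsSeminorm_nonneg u) (epsSeminorm_nonneg v))
  rintro r ⟨f, hf, rfl⟩
  rw [map_add]
  refine (norm_add_le _ _).trans (add_le_add ?_ ?_)
  · exact le_csSup (epsSet_bdd u) ⟨f, hf, rfl⟩
  · exact le_csSup (epsSet_bdd v) ⟨f, hf, rfl⟩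

theorem epsSeminorm_smul_le (c : 𝕜) (u : ⨂[𝕜] i, X i) :
    epsSeminorm 𝕜 X (c • u) ≤ ‖c‖ * epsSeminorm 𝕜 X u := by
  refine Real.sSup_le ?_ (mul_nonneg (norm_nonneg c) (epsSeminorm_nonneg u))
  rintro r ⟨f, hf, rfl⟩
  rw [map_smul, norm_smul]
  exact mul_le_mul_of_nonneg_left (le_csSup (epsSet_bdd u) ⟨f, hf, rfl⟩) (norm_nonneg c)

theorem epsSeminorm_smul (c : 𝕜) (u : ⨂[𝕜] i, X i) :
    epsSeminorm 𝕜 X (c • u) = ‖c‖ * epsSeminorm 𝕜 X u := by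
  rcases eq_or_ne c 0 with rfl | hc
  · rw [norm_zero, zero_mul, zero_smul]
    refine le_antisymm (Real.sSup_le ?_ le_rfl) (epsSeminorm_nonneg 0)
    rintro r ⟨f, hf, rfl⟩
    simp
  · refine le_antisymm (epsSeminorm_smul_le c u) ?_
    have h := epsSeminorm_smul_le c⁻¹ (c • u)
    rw [inv_smul_smul₀ hc, norm_inv] at h
    calc ‖c‖ * epsSeminorm 𝕜 X u
        ≤ ‖c‖ * (‖c‖⁻¹ * epsSeminorm 𝕜 X (c • u)) :=
          mul_le_mul_of_nonneg_left h (norm_nonneg c)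
      _ = epsSeminorm 𝕜 X (c • u) := by
          rw [← mul_assoc, mul_inv_cancel₀ (norm_ne_zero_iff.mpr hc), one_mul]

end EpsLemmas


theorem projectiveSeminorm_map_le {𝕜 : Type u} [RCLike 𝕜] {ι : Type} [Fintype ι]
    {E F : ι → Type u} [∀ i, NormedAddCommGroup (E i)] [∀ i, NormedSpace 𝕜 (E i)]
    [∀ i, NormedAddCommGroup (F i)] [∀ i, NormedSpace 𝕜 (F i)]
    (g : ∀ i, E i →ₗ[𝕜] F i) (hg : ∀ i x, ‖g i x‖ ≤ ‖x‖) (u : ⨂[𝕜] i, E i) :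
    projectiveSeminorm (PiTensorProduct.map g u) ≤ projectiveSeminorm u := by
  rw [projectiveSeminorm_apply, projectiveSeminorm_apply]
  letI := nonempty_subtype.mpr (nonempty_lifts u)
  refine le_ciInf fun p => ?_
  have hmem : FreeAddMonoid.ofList
      (List.map (fun y : 𝕜 × (∀ i, E i) => (y.1, fun i => g i (y.2 i))) p.1.toList) ∈
        lifts (PiTensorProduct.map g u) := by
    rw [mem_lifts_iff, FreeAddMonoid.toList_ofList]
    have hp := (mem_lifts_iff u p.1).mp p.2
    calc (List.map (fun x : 𝕜 × (∀ i, F i) => x.1 • ⨂ₜ[𝕜] i, x.2 i)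
          (List.map (fun y : 𝕜 × (∀ i, E i) => (y.1, fun i => g i (y.2 i))) p.1.toList)).sum
        = (List.map ((PiTensorProduct.map g) ∘ (fun x : 𝕜 × (∀ i, E i) =>
            x.1 • ⨂ₜ[𝕜] i, x.2 i)) p.1.toList).sum := by
          rw [List.map_map]
          congr 1
          refine List.map_congr_left fun y _ => ?_
          simp [PiTensorProduct.map_tprod]
      _ = PiTensorProduct.map g u := by
          rw [← List.map_map, ← map_list_sum, hp]
  refine ciInf_le_of_le (bddBelow_projectiveSemiNormAux _) ⟨_, hmem⟩ ?_
  simp only [projectiveSeminormAux, FreeAddMonoid.toList_ofList, List.map_map]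
  refine List.sum_le_sum fun y _ => ?_
  simp only [Function.comp_apply]
  refine mul_le_mul_of_nonneg_left ?_ (norm_nonneg _)
  exact Finset.prod_le_prod (fun i _ => norm_nonneg _) (fun i _ => hg i _)

/-- A reasonable crossnorm on `⨂ᵢ Xᵢ`: a seminorm-like functional lying between the
injective and projective tensor seminorms. -/
structure ReasonableCrossnorm (𝕜 : Type u) [RCLike 𝕜] {ι : Type} [Fintype ι] [Nonempty ι]
    (X : ι → Type u) [∀ i, NormedAddCommGroup (X i)] [∀ i, NormedSpace 𝕜 (X i)] :
    Type u where
  toFun : (⨂[𝕜] i, X i) → ℝ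
  add_le' : ∀ u v, toFun (u + v) ≤ toFun u + toFun v
  smul' : ∀ (c : 𝕜) (u), toFun (c • u) = ‖c‖ * toFun u
  le_proj' : ∀ u, toFun u ≤ projectiveSeminorm u
  inj_le' : ∀ u, epsSeminorm 𝕜 X u ≤ toFun u

section Basic

variable {𝕜 : Type u} [RCLike 𝕜] {ι : Type} [Fintype ι] [Nonempty ι] {X : ι → Type u}
    [∀ i, NormedAddCommGroup (X i)] [∀ i, NormedSpace 𝕜 (X i)]
    {Y : Type u} [NormedAddCommGroup Y] [NormedSpace 𝕜 Y]

/-- The projective tensor norm `π` as a reasonable crossnorm. -/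
def ReasonableCrossnorm.proj : ReasonableCrossnorm 𝕜 X where
  toFun := projectiveSeminorm
  add_le' := fun u v => map_add_le_add _ u v
  smul' := fun c u => map_smul_eq_mul _ c u
  le_proj' := fun _ => le_rfl
  inj_le' := fun u => epsSeminorm_le_projectiveSeminorm u

/-- The injective tensor norm `ε` as a reasonable crossnorm. -/
def ReasonableCrossnorm.inj : ReasonableCrossnorm 𝕜 X where
  toFun := epsSeminorm 𝕜 X
  add_le' := fun u v => epsSeminorm_add_le u v
  smul' := fun c u => epsSeminorm_smul c u
  le_proj' := fun u => epsSeminorm_le_projectiveSeminorm u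
  inj_le' := fun _ => le_rfl

/-- `𝓛^β(X₁,…,Xₙ)`: the space of linear functionals on `⨂ᵢ Xᵢ` that are bounded
with respect to `β` (equivalently, multilinear forms whose `β`-linearization is
bounded). -/
def BetaDual (β : ReasonableCrossnorm 𝕜 X) : Submodule 𝕜 ((⨂[𝕜] i, X i) →ₗ[𝕜] 𝕜) where
  carrier := {f | ∃ C, 0 ≤ C ∧ ∀ u, ‖f u‖ ≤ C * β.toFun u}
  add_mem' := by
    rintro f g ⟨C, hC, hf⟩ ⟨D, hD, hg⟩
    exact ⟨C + D, add_nonneg hC hD, fun u => by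
      simpa [add_mul] using (norm_add_le (f u) (g u)).trans (add_le_add (hf u) (hg u))⟩
  zero_mem' := ⟨0, le_rfl, fun u => by simp⟩
  smul_mem' := by
    rintro c f ⟨C, hC, hf⟩
    exact ⟨‖c‖ * C, mul_nonneg (norm_nonneg c) hC, fun u => by
      simpa [norm_smul, mul_assoc] using mul_le_mul_of_nonneg_left (hf u) (norm_nonneg c)⟩

/-- The dual norm `‖·‖_β` of a `β`-bounded functional (multilinear form). -/
def betaDualNorm (β : ReasonableCrossnorm 𝕜 X) (f : (⨂[𝕜] i, X i) →ₗ[𝕜] 𝕜) : ℝ :=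
  sInf {C | 0 ≤ C ∧ ∀ u, ‖f u‖ ≤ C * β.toFun u}

/-- Evaluation of continuous functionals at a point, as a linear map into the
algebraic dual of the topological dual. -/
def evalCLM (𝕜 : Type u) [RCLike 𝕜] (M : Type u) [NormedAddCommGroup M]
    [NormedSpace 𝕜 M] : M →ₗ[𝕜] ((M →L[𝕜] 𝕜) →ₗ[𝕜] 𝕜) where
  toFun y :=
    { toFun := fun g => g y
      map_add' := fun g h => rfl
      map_smul' := fun c g => rfl }
  map_add' y z := by ext g; simp
  map_smul' c y := by ext g; simp

/-- Evaluation of `β`-bounded forms at a tensor. -/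
def evalBeta (β : ReasonableCrossnorm 𝕜 X) :
    (⨂[𝕜] i, X i) →ₗ[𝕜] ((BetaDual β) →ₗ[𝕜] 𝕜) where
  toFun u :=
    { toFun := fun f => f.1 u
      map_add' := fun f g => rfl
      map_smul' := fun c f => rfl }
  map_add' u v := by ext f; exact f.1.map_add u v
  map_smul' c u := by ext f; exact f.1.map_smul c u

/-- Evaluation pairing: an element of `𝓛^β(X₁,…,Xₙ) ⊗ Y` acts as a functional on
`X₁⊗⋯⊗Xₙ⊗Y*` by `⟨φ⊗y , u⊗y*⟩ = φ(u)·y*(y)`. -/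
def evalLD (β : ReasonableCrossnorm 𝕜 X) :
    ((BetaDual β) ⊗[𝕜] Y) →ₗ[𝕜] (((⨂[𝕜] i, X i) ⊗[𝕜] (Y →L[𝕜] 𝕜)) →ₗ[𝕜] 𝕜) :=
  (TensorProduct.dualDistrib 𝕜 (⨂[𝕜] i, X i) (Y →L[𝕜] 𝕜)).comp
    (TensorProduct.map (BetaDual β).subtype (evalCLM 𝕜 Y))

/-- Converse pairing: an element of `X₁⊗⋯⊗Xₙ⊗Y` acts as a functional on
`𝓛^β(X₁,…,Xₙ) ⊗ Y*` by `⟨u⊗y , φ⊗y*⟩ = φ(u)·y*(y)`. -/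
def pairSF (β : ReasonableCrossnorm 𝕜 X) :
    ((⨂[𝕜] i, X i) ⊗[𝕜] Y) →ₗ[𝕜] (((BetaDual β) ⊗[𝕜] (Y →L[𝕜] 𝕜)) →ₗ[𝕜] 𝕜) :=
  (TensorProduct.dualDistrib 𝕜 (BetaDual β) (Y →L[𝕜] 𝕜)).comp
    (TensorProduct.map (evalBeta β) (evalCLM 𝕜 Y))

/-- The functional `φ ⊗ y*` on `X₁⊗⋯⊗Xₙ⊗Y`. -/
def funcSY (φ : (⨂[𝕜] i, X i) →ₗ[𝕜] 𝕜) (g : Y →L[𝕜] 𝕜) :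
    ((⨂[𝕜] i, X i) ⊗[𝕜] Y) →ₗ[𝕜] 𝕜 :=
  TensorProduct.dualDistrib 𝕜 (⨂[𝕜] i, X i) Y (φ ⊗ₜ[𝕜] (g : Y →ₗ[𝕜] 𝕜))

/-- The rank one multilinear operator `φ · y : (x¹,…,xⁿ) ↦ φ(x¹,…,xⁿ)·y`. -/
def rankOne (φ : MultilinearMap 𝕜 X 𝕜) (y : Y) : MultilinearMap 𝕜 X Y :=
  (LinearMap.toSpanSingleton 𝕜 Y y).compMultilinearMap φ

/-- The multilinear operator associated to a linear map on the tensor product. -/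
def toMulti (L : (⨂[𝕜] i, X i) →ₗ[𝕜] Y) : MultilinearMap 𝕜 X Y :=
  L.compMultilinearMap (PiTensorProduct.tprod 𝕜)

/-- The finite rank operator (as a linear map on the tensor product) associated to
`v ∈ 𝓛^β(X₁,…,Xₙ) ⊗ Y` via `φ ⊗ y ↦ φ(·)y`. -/
def toOp (β : ReasonableCrossnorm 𝕜 X) :
    ((BetaDual β) ⊗[𝕜] Y) →ₗ[𝕜] ((⨂[𝕜] i, X i) →ₗ[𝕜] Y) :=
  TensorProduct.lift ((LinearMap.smulRightₗ).comp (BetaDual β).subtype)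

/-- The restriction `β|` of a reasonable crossnorm to subspaces `Eᵢ ⊂ Xᵢ`
(Remark 2.1 of the paper: it is again a reasonable crossnorm). -/
def ReasonableCrossnorm.restrict (β : ReasonableCrossnorm 𝕜 X)
    (E : ∀ i, Submodule 𝕜 (X i)) :
    ReasonableCrossnorm 𝕜 (fun i => (E i : Type u)) where
  toFun u := β.toFun (PiTensorProduct.map (fun i => (E i).subtype) u)
  add_le' u v := by simp only [map_add]; exact β.add_le' _ _
  smul' c u := by simp only [map_smul]; exact β.smul' _ _
  le_proj' u :=
    (β.le_proj' _).trans
      (projectiveSeminorm_map_le _ (fun i x => le_of_eq rfl) u)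
  inj_le' u := by
    refine Real.sSup_le ?_ (le_trans (epsSeminorm_nonneg _) (β.inj_le' _))
    rintro r ⟨f, hf, rfl⟩
    choose g hgx hgn using fun i => exists_extension_norm_eq (E i) (f i)
    have key : PiTensorProduct.lift
        ((ContinuousMultilinearMap.mkPiAlgebra 𝕜 ι 𝕜).compContinuousLinearMap
          f).toMultilinearMap u =
        PiTensorProduct.lift
          ((ContinuousMultilinearMap.mkPiAlgebra 𝕜 ι 𝕜).compContinuousLinearMap
            g).toMultilinearMap
          (PiTensorProduct.map (fun i => (E i).subtype) u) := by
      rw [← LinearMap.comp_apply, PiTensorProduct.lift_comp_map]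
      congr 1
      ext m
      simp only [LinearMap.compMultilinearMap_apply, PiTensorProduct.lift.tprod,
        ContinuousMultilinearMap.coe_coe, MultilinearMap.compLinearMap_apply,
        ContinuousMultilinearMap.compContinuousLinearMap_apply,
        ContinuousMultilinearMap.mkPiAlgebra_apply]
      exact Finset.prod_congr rfl fun i _ => (hgx i (m i)).symm
    rw [key]
    refine le_trans (le_csSup (epsSet_bdd _) ⟨g, fun i => (hgn i).le.trans (hf i), rfl⟩)
      (β.inj_le' _)

/-- Restriction of `β`-bounded forms to subspaces. -/
def restrictDual (β : ReasonableCrossnorm 𝕜 X) (E : ∀ i, Submodule 𝕜 (X i)) :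
    (BetaDual β) →ₗ[𝕜] (BetaDual (β.restrict E)) where
  toFun f := ⟨f.1 ∘ₗ PiTensorProduct.map (fun i => (E i).subtype),
    by obtain ⟨C, hC, hb⟩ := f.2; exact ⟨C, hC, fun u => hb _⟩⟩
  map_add' f g := by ext u; rfl
  map_smul' c f := by ext u; rfl

/-- The operator `Q_L ∘ f_T ∘ I_{E₁,…,Eₙ}` between finite dimensional spaces. -/
def smallOp {L : Submodule 𝕜 Y} (hL : IsClosed (L : Set Y))
    (T : MultilinearMap 𝕜 X Y) (E : ∀ i, Submodule 𝕜 (X i)) :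
    MultilinearMap 𝕜 (fun i => (E i : Type u)) (Y ⧸ L) :=
  toMulti (L.mkQ ∘ₗ PiTensorProduct.lift T ∘ₗ PiTensorProduct.map (fun i => (E i).subtype))

end Basic
section Norms

variable {𝕜 : Type u} [RCLike 𝕜] {ι : Type} [Fintype ι] [Nonempty ι] {X : ι → Type u}
    [∀ i, NormedAddCommGroup (X i)] [∀ i, NormedSpace 𝕜 (X i)]
    {Y : Type u} [NormedAddCommGroup Y] [NormedSpace 𝕜 Y]

/-- The Lipschitz constant `Lip^β(f)` of (the restriction to the Segre cone of) a linear
map on the tensor product, with respect to the metric induced by `β`. -/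
def lipschitzNormOn (β : ReasonableCrossnorm 𝕜 X) (f : (⨂[𝕜] i, X i) →ₗ[𝕜] Y) : ℝ :=
  sInf {C | 0 ≤ C ∧ ∀ p ∈ Segre 𝕜 X, ∀ q ∈ Segre 𝕜 X,
    ‖f p - f q‖ ≤ C * β.toFun (p - q)}

/-- The greatest Σ-tensor norm on spaces, `π^β`. -/
def piBetaS (β : ReasonableCrossnorm 𝕜 X) (u : (⨂[𝕜] i, X i) ⊗[𝕜] Y) : ℝ :=
  sInf {r | ∃ (m : ℕ) (p q : Fin m → ⨂[𝕜] i, X i) (y : Fin m → Y),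
    (∀ k, p k ∈ Segre 𝕜 X ∧ q k ∈ Segre 𝕜 X) ∧
    u = ∑ k, (p k - q k) ⊗ₜ[𝕜] y k ∧ r = ∑ k, β.toFun (p k - q k) * ‖y k‖}

/-- The least Σ-tensor norm on spaces, `ε^β`. -/
def epsBetaS (β : ReasonableCrossnorm 𝕜 X) (u : (⨂[𝕜] i, X i) ⊗[𝕜] Y) : ℝ :=
  sSup {r | ∃ (φ : (⨂[𝕜] i, X i) →ₗ[𝕜] 𝕜) (g : Y →L[𝕜] 𝕜),
    (∀ w, ‖φ w‖ ≤ β.toFun w) ∧ ‖g‖ ≤ 1 ∧ r = ‖funcSY φ g u‖}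

/-- The greatest Σ-tensor norm on duals, `π_β`. -/
def piBetaD (β : ReasonableCrossnorm 𝕜 X) (v : (BetaDual β) ⊗[𝕜] Y) : ℝ :=
  sInf {r | ∃ (m : ℕ) (f : Fin m → BetaDual β) (y : Fin m → Y) (C : Fin m → ℝ),
    (∀ k, 0 ≤ C k ∧ ∀ u, ‖(f k).1 u‖ ≤ C k * β.toFun u) ∧
    v = ∑ k, (f k) ⊗ₜ[𝕜] (y k) ∧ r = ∑ k, C k * ‖y k‖}

/-- The least Σ-tensor norm on duals, `ε_β`. -/
def epsBetaD (β : ReasonableCrossnorm 𝕜 X) (v : (BetaDual β) ⊗[𝕜] Y) : ℝ :=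
  sSup {r | ∃ p ∈ Segre 𝕜 X, ∃ q ∈ Segre 𝕜 X, ∃ g : Y →L[𝕜] 𝕜,
    β.toFun (p - q) ≤ 1 ∧ ‖g‖ ≤ 1 ∧ r = ‖evalLD β v ((p - q) ⊗ₜ[𝕜] g)‖}

end Norms
section Structures

variable (𝕜 : Type u) [RCLike 𝕜]

/-- A Σ-ideal of multilinear operators on the class of normed (Banach) spaces
(Definition 3.1): an assignment, to each election `(n, X₁,…,Xₙ, Y, β)`, of a class of
multilinear operators together with an ideal norm, satisfying I1, I2, I3. -/
structure SigmaIdeal where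
  Mem : ∀ {ι : Type} [Fintype ι] [Nonempty ι] {X : ι → Type u}
    [∀ i, NormedAddCommGroup (X i)] [∀ i, NormedSpace 𝕜 (X i)]
    {Y : Type u} [NormedAddCommGroup Y] [NormedSpace 𝕜 Y],
    ReasonableCrossnorm 𝕜 X → MultilinearMap 𝕜 X Y → Prop
  anorm : ∀ {ι : Type} [Fintype ι] [Nonempty ι] {X : ι → Type u}
    [∀ i, NormedAddCommGroup (X i)] [∀ i, NormedSpace 𝕜 (X i)]
    {Y : Type u} [NormedAddCommGroup Y] [NormedSpace 𝕜 Y],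
    ReasonableCrossnorm 𝕜 X → MultilinearMap 𝕜 X Y → ℝ
  /-- I1: rank one operators belong to the components. -/
  I1 : ∀ {ι : Type} [Fintype ι] [Nonempty ι] {X : ι → Type u}
    [∀ i, NormedAddCommGroup (X i)] [∀ i, NormedSpace 𝕜 (X i)]
    {Y : Type u} [NormedAddCommGroup Y] [NormedSpace 𝕜 Y]
    (β : ReasonableCrossnorm 𝕜 X) (φ : MultilinearMap 𝕜 X 𝕜) (C : ℝ), 0 ≤ C →
    (∀ u, ‖PiTensorProduct.lift φ u‖ ≤ C * β.toFun u) → ∀ y : Y,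
    Mem β (rankOne φ y) ∧ anorm β (rankOne φ y) ≤ C * ‖y‖
  /-- I2: `Lip^β(f_T) ≤ A^β(T)`. -/
  I2 : ∀ {ι : Type} [Fintype ι] [Nonempty ι] {X : ι → Type u}
    [∀ i, NormedAddCommGroup (X i)] [∀ i, NormedSpace 𝕜 (X i)]
    {Y : Type u} [NormedAddCommGroup Y] [NormedSpace 𝕜 Y]
    (β : ReasonableCrossnorm 𝕜 X) (T : MultilinearMap 𝕜 X Y), Mem β T →
    ∀ p ∈ Segre 𝕜 X, ∀ q ∈ Segre 𝕜 X,
      ‖PiTensorProduct.lift T p - PiTensorProduct.lift T q‖ ≤ anorm β T * β.toFun (p - q)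
  /-- I3: the Σ-ideal property. -/
  I3 : ∀ {ι κ : Type} [Fintype ι] [Nonempty ι] [Fintype κ] [Nonempty κ]
    {X : ι → Type u} [∀ i, NormedAddCommGroup (X i)] [∀ i, NormedSpace 𝕜 (X i)]
    {Z : κ → Type u} [∀ j, NormedAddCommGroup (Z j)] [∀ j, NormedSpace 𝕜 (Z j)]
    {Y W : Type u} [NormedAddCommGroup Y] [NormedSpace 𝕜 Y]
    [NormedAddCommGroup W] [NormedSpace 𝕜 W]
    (β : ReasonableCrossnorm 𝕜 X) (θ : ReasonableCrossnorm 𝕜 Z)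
    (R : (⨂[𝕜] j, Z j) →ₗ[𝕜] (⨂[𝕜] i, X i)) (CR : ℝ), 0 ≤ CR →
    (∀ v, β.toFun (R v) ≤ CR * θ.toFun v) →
    (∀ p ∈ Segre 𝕜 Z, R p ∈ Segre 𝕜 X) →
    ∀ (T : MultilinearMap 𝕜 X Y), Mem β T → ∀ (S : Y →L[𝕜] W),
    Mem θ (toMulti (S.toLinearMap ∘ₗ PiTensorProduct.lift T ∘ₗ R)) ∧
      anorm θ (toMulti (S.toLinearMap ∘ₗ PiTensorProduct.lift T ∘ₗ R)) ≤
        CR * anorm β T * ‖S‖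

/-- A Σ-tensor norm on spaces (Definition 4.1): an assignment, to each election, of a
norm on `X₁⊗⋯⊗Xₙ⊗Y` satisfying S1, S2 and the uniform property S3. -/
structure SigmaTensorNormOnSpaces where
  tn : ∀ {ι : Type} [Fintype ι] [Nonempty ι] {X : ι → Type u}
    [∀ i, NormedAddCommGroup (X i)] [∀ i, NormedSpace 𝕜 (X i)]
    {Y : Type u} [NormedAddCommGroup Y] [NormedSpace 𝕜 Y],
    ReasonableCrossnorm 𝕜 X → ((⨂[𝕜] i, X i) ⊗[𝕜] Y) → ℝ
  tn_add_le : ∀ {ι : Type} [Fintype ι] [Nonempty ι] {X : ι → Type u}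
    [∀ i, NormedAddCommGroup (X i)] [∀ i, NormedSpace 𝕜 (X i)]
    {Y : Type u} [NormedAddCommGroup Y] [NormedSpace 𝕜 Y]
    (β : ReasonableCrossnorm 𝕜 X) (u v : (⨂[𝕜] i, X i) ⊗[𝕜] Y),
    tn β (u + v) ≤ tn β u + tn β v
  tn_smul : ∀ {ι : Type} [Fintype ι] [Nonempty ι] {X : ι → Type u}
    [∀ i, NormedAddCommGroup (X i)] [∀ i, NormedSpace 𝕜 (X i)]
    {Y : Type u} [NormedAddCommGroup Y] [NormedSpace 𝕜 Y]
    (β : ReasonableCrossnorm 𝕜 X) (c : 𝕜) (u : (⨂[𝕜] i, X i) ⊗[𝕜] Y),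
    tn β (c • u) = ‖c‖ * tn β u
  /-- S1. -/
  S1 : ∀ {ι : Type} [Fintype ι] [Nonempty ι] {X : ι → Type u}
    [∀ i, NormedAddCommGroup (X i)] [∀ i, NormedSpace 𝕜 (X i)]
    {Y : Type u} [NormedAddCommGroup Y] [NormedSpace 𝕜 Y]
    (β : ReasonableCrossnorm 𝕜 X), ∀ p ∈ Segre 𝕜 X, ∀ q ∈ Segre 𝕜 X, ∀ y : Y,
    tn β ((p - q) ⊗ₜ[𝕜] y) ≤ β.toFun (p - q) * ‖y‖
  /-- S2. -/
  S2 : ∀ {ι : Type} [Fintype ι] [Nonempty ι] {X : ι → Type u}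
    [∀ i, NormedAddCommGroup (X i)] [∀ i, NormedSpace 𝕜 (X i)]
    {Y : Type u} [NormedAddCommGroup Y] [NormedSpace 𝕜 Y]
    (β : ReasonableCrossnorm 𝕜 X) (φ : (⨂[𝕜] i, X i) →ₗ[𝕜] 𝕜) (C : ℝ), 0 ≤ C →
    (∀ w, ‖φ w‖ ≤ C * β.toFun w) → ∀ (g : Y →L[𝕜] 𝕜) (u : (⨂[𝕜] i, X i) ⊗[𝕜] Y),
    ‖funcSY φ g u‖ ≤ C * ‖g‖ * tn β u
  /-- S3: the uniform property. -/
  S3 : ∀ {ι κ : Type} [Fintype ι] [Nonempty ι] [Fintype κ] [Nonempty κ]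
    {X : ι → Type u} [∀ i, NormedAddCommGroup (X i)] [∀ i, NormedSpace 𝕜 (X i)]
    {Z : κ → Type u} [∀ j, NormedAddCommGroup (Z j)] [∀ j, NormedSpace 𝕜 (Z j)]
    {Y W : Type u} [NormedAddCommGroup Y] [NormedSpace 𝕜 Y]
    [NormedAddCommGroup W] [NormedSpace 𝕜 W]
    (β : ReasonableCrossnorm 𝕜 X) (θ : ReasonableCrossnorm 𝕜 Z)
    (R : (⨂[𝕜] j, Z j) →ₗ[𝕜] (⨂[𝕜] i, X i)) (CR : ℝ), 0 ≤ CR →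
    (∀ v, β.toFun (R v) ≤ CR * θ.toFun v) →
    (∀ p ∈ Segre 𝕜 Z, R p ∈ Segre 𝕜 X) →
    ∀ (S : W →L[𝕜] Y) (u : (⨂[𝕜] j, Z j) ⊗[𝕜] W),
    tn β (TensorProduct.map R S.toLinearMap u) ≤ CR * ‖S‖ * tn θ u

/-- A Σ-tensor norm on duals (Definition 4.2): an assignment, to each election, of a
norm on `𝓛^β(X₁,…,Xₙ) ⊗ Y` satisfying D1, D2 and the uniform property D3 with respect
to Σ-preserving operators. -/
structure SigmaTensorNormOnDuals where
  tn : ∀ {ι : Type} [Fintype ι] [Nonempty ι] {X : ι → Type u}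
    [∀ i, NormedAddCommGroup (X i)] [∀ i, NormedSpace 𝕜 (X i)]
    {Y : Type u} [NormedAddCommGroup Y] [NormedSpace 𝕜 Y]
    (β : ReasonableCrossnorm 𝕜 X), ((BetaDual β) ⊗[𝕜] Y) → ℝ
  tn_add_le : ∀ {ι : Type} [Fintype ι] [Nonempty ι] {X : ι → Type u}
    [∀ i, NormedAddCommGroup (X i)] [∀ i, NormedSpace 𝕜 (X i)]
    {Y : Type u} [NormedAddCommGroup Y] [NormedSpace 𝕜 Y]
    (β : ReasonableCrossnorm 𝕜 X) (v w : (BetaDual β) ⊗[𝕜] Y),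
    tn β (v + w) ≤ tn β v + tn β w
  tn_smul : ∀ {ι : Type} [Fintype ι] [Nonempty ι] {X : ι → Type u}
    [∀ i, NormedAddCommGroup (X i)] [∀ i, NormedSpace 𝕜 (X i)]
    {Y : Type u} [NormedAddCommGroup Y] [NormedSpace 𝕜 Y]
    (β : ReasonableCrossnorm 𝕜 X) (c : 𝕜) (v : (BetaDual β) ⊗[𝕜] Y),
    tn β (c • v) = ‖c‖ * tn β v
  /-- D1. -/
  D1 : ∀ {ι : Type} [Fintype ι] [Nonempty ι] {X : ι → Type u}
    [∀ i, NormedAddCommGroup (X i)] [∀ i, NormedSpace 𝕜 (X i)]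
    {Y : Type u} [NormedAddCommGroup Y] [NormedSpace 𝕜 Y]
    (β : ReasonableCrossnorm 𝕜 X) (f : BetaDual β) (C : ℝ), 0 ≤ C →
    (∀ u, ‖f.1 u‖ ≤ C * β.toFun u) → ∀ y : Y, tn β (f ⊗ₜ[𝕜] y) ≤ C * ‖y‖
  /-- D2. -/
  D2 : ∀ {ι : Type} [Fintype ι] [Nonempty ι] {X : ι → Type u}
    [∀ i, NormedAddCommGroup (X i)] [∀ i, NormedSpace 𝕜 (X i)]
    {Y : Type u} [NormedAddCommGroup Y] [NormedSpace 𝕜 Y]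
    (β : ReasonableCrossnorm 𝕜 X), ∀ p ∈ Segre 𝕜 X, ∀ q ∈ Segre 𝕜 X,
    ∀ (g : Y →L[𝕜] 𝕜) (v : (BetaDual β) ⊗[𝕜] Y),
    ‖evalLD β v ((p - q) ⊗ₜ[𝕜] g)‖ ≤ β.toFun (p - q) * ‖g‖ * tn β v
  /-- D3: the uniform property with respect to Σ-preserving operators. -/
  D3 : ∀ {ι κ : Type} [Fintype ι] [Nonempty ι] [Fintype κ] [Nonempty κ]
    {X : ι → Type u} [∀ i, NormedAddCommGroup (X i)] [∀ i, NormedSpace 𝕜 (X i)]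
    {Z : κ → Type u} [∀ j, NormedAddCommGroup (Z j)] [∀ j, NormedSpace 𝕜 (Z j)]
    {Y W : Type u} [NormedAddCommGroup Y] [NormedSpace 𝕜 Y]
    [NormedAddCommGroup W] [NormedSpace 𝕜 W]
    (β : ReasonableCrossnorm 𝕜 X) (θ : ReasonableCrossnorm 𝕜 Z)
    (A : (BetaDual β) →ₗ[𝕜] (BetaDual θ)) (CA : ℝ), 0 ≤ CA →
    (∀ (f : BetaDual β) (C : ℝ), 0 ≤ C → (∀ u, ‖f.1 u‖ ≤ C * β.toFun u) →
      ∀ w, ‖(A f).1 w‖ ≤ CA * C * θ.toFun w) →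
    (∀ q ∈ Segre 𝕜 Z, ∃ p ∈ Segre 𝕜 X, ∀ f : BetaDual β, (A f).1 q = f.1 p) →
    ∀ (B : Y →L[𝕜] W) (v : (BetaDual β) ⊗[𝕜] Y),
    tn θ (TensorProduct.map A B.toLinearMap v) ≤ CA * ‖B‖ * tn β v

end Structures
section StructuresFin

variable (𝕜 : Type u) [RCLike 𝕜]

/-- A Σ-ideal of multilinear operators on the class of finite dimensional normed spaces
(Definition 3.1): an assignment, to each election `(n, X₁,…,Xₙ, Y, β)`, of a class of
multilinear operators together with an ideal norm, satisfying I1, I2, I3. -/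
structure SigmaIdealFin where
  Mem : ∀ {ι : Type} [Fintype ι] [Nonempty ι] {X : ι → Type u}
    [∀ i, NormedAddCommGroup (X i)] [∀ i, NormedSpace 𝕜 (X i)] [∀ i, FiniteDimensional 𝕜 (X i)]
    {Y : Type u} [NormedAddCommGroup Y] [NormedSpace 𝕜 Y] [FiniteDimensional 𝕜 Y],
    ReasonableCrossnorm 𝕜 X → MultilinearMap 𝕜 X Y → Prop
  anorm : ∀ {ι : Type} [Fintype ι] [Nonempty ι] {X : ι → Type u}
    [∀ i, NormedAddCommGroup (X i)] [∀ i, NormedSpace 𝕜 (X i)] [∀ i, FiniteDimensional 𝕜 (X i)]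
    {Y : Type u} [NormedAddCommGroup Y] [NormedSpace 𝕜 Y] [FiniteDimensional 𝕜 Y],
    ReasonableCrossnorm 𝕜 X → MultilinearMap 𝕜 X Y → ℝ
  /-- I1: rank one operators belong to the components. -/
  I1 : ∀ {ι : Type} [Fintype ι] [Nonempty ι] {X : ι → Type u}
    [∀ i, NormedAddCommGroup (X i)] [∀ i, NormedSpace 𝕜 (X i)] [∀ i, FiniteDimensional 𝕜 (X i)]
    {Y : Type u} [NormedAddCommGroup Y] [NormedSpace 𝕜 Y] [FiniteDimensional 𝕜 Y]
    (β : ReasonableCrossnorm 𝕜 X) (φ : MultilinearMap 𝕜 X 𝕜) (C : ℝ), 0 ≤ C →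
    (∀ u, ‖PiTensorProduct.lift φ u‖ ≤ C * β.toFun u) → ∀ y : Y,
    Mem β (rankOne φ y) ∧ anorm β (rankOne φ y) ≤ C * ‖y‖
  /-- I2: `Lip^β(f_T) ≤ A^β(T)`. -/
  I2 : ∀ {ι : Type} [Fintype ι] [Nonempty ι] {X : ι → Type u}
    [∀ i, NormedAddCommGroup (X i)] [∀ i, NormedSpace 𝕜 (X i)] [∀ i, FiniteDimensional 𝕜 (X i)]
    {Y : Type u} [NormedAddCommGroup Y] [NormedSpace 𝕜 Y] [FiniteDimensional 𝕜 Y]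
    (β : ReasonableCrossnorm 𝕜 X) (T : MultilinearMap 𝕜 X Y), Mem β T →
    ∀ p ∈ Segre 𝕜 X, ∀ q ∈ Segre 𝕜 X,
      ‖PiTensorProduct.lift T p - PiTensorProduct.lift T q‖ ≤ anorm β T * β.toFun (p - q)
  /-- I3: the Σ-ideal property. -/
  I3 : ∀ {ι κ : Type} [Fintype ι] [Nonempty ι] [Fintype κ] [Nonempty κ]
    {X : ι → Type u} [∀ i, NormedAddCommGroup (X i)] [∀ i, NormedSpace 𝕜 (X i)] [∀ i, FiniteDimensional 𝕜 (X i)]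
    {Z : κ → Type u} [∀ j, NormedAddCommGroup (Z j)] [∀ j, NormedSpace 𝕜 (Z j)] [∀ j, FiniteDimensional 𝕜 (Z j)]
    {Y W : Type u} [NormedAddCommGroup Y] [NormedSpace 𝕜 Y] [FiniteDimensional 𝕜 Y]
    [NormedAddCommGroup W] [NormedSpace 𝕜 W] [FiniteDimensional 𝕜 W]
    (β : ReasonableCrossnorm 𝕜 X) (θ : ReasonableCrossnorm 𝕜 Z)
    (R : (⨂[𝕜] j, Z j) →ₗ[𝕜] (⨂[𝕜] i, X i)) (CR : ℝ), 0 ≤ CR →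
    (∀ v, β.toFun (R v) ≤ CR * θ.toFun v) →
    (∀ p ∈ Segre 𝕜 Z, R p ∈ Segre 𝕜 X) →
    ∀ (T : MultilinearMap 𝕜 X Y), Mem β T → ∀ (S : Y →L[𝕜] W),
    Mem θ (toMulti (S.toLinearMap ∘ₗ PiTensorProduct.lift T ∘ₗ R)) ∧
      anorm θ (toMulti (S.toLinearMap ∘ₗ PiTensorProduct.lift T ∘ₗ R)) ≤
        CR * anorm β T * ‖S‖

/-- A Σ-tensor norm on spaces (Definition 4.1): an assignment, to each election, of a
norm on `X₁⊗⋯⊗Xₙ⊗Y` satisfying S1, S2 and the uniform property S3. -/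
structure SigmaTensorNormOnSpacesFin where
  tn : ∀ {ι : Type} [Fintype ι] [Nonempty ι] {X : ι → Type u}
    [∀ i, NormedAddCommGroup (X i)] [∀ i, NormedSpace 𝕜 (X i)] [∀ i, FiniteDimensional 𝕜 (X i)]
    {Y : Type u} [NormedAddCommGroup Y] [NormedSpace 𝕜 Y] [FiniteDimensional 𝕜 Y],
    ReasonableCrossnorm 𝕜 X → ((⨂[𝕜] i, X i) ⊗[𝕜] Y) → ℝ
  tn_add_le : ∀ {ι : Type} [Fintype ι] [Nonempty ι] {X : ι → Type u}
    [∀ i, NormedAddCommGroup (X i)] [∀ i, NormedSpace 𝕜 (X i)] [∀ i, FiniteDimensional 𝕜 (X i)]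
    {Y : Type u} [NormedAddCommGroup Y] [NormedSpace 𝕜 Y] [FiniteDimensional 𝕜 Y]
    (β : ReasonableCrossnorm 𝕜 X) (u v : (⨂[𝕜] i, X i) ⊗[𝕜] Y),
    tn β (u + v) ≤ tn β u + tn β v
  tn_smul : ∀ {ι : Type} [Fintype ι] [Nonempty ι] {X : ι → Type u}
    [∀ i, NormedAddCommGroup (X i)] [∀ i, NormedSpace 𝕜 (X i)] [∀ i, FiniteDimensional 𝕜 (X i)]
    {Y : Type u} [NormedAddCommGroup Y] [NormedSpace 𝕜 Y] [FiniteDimensional 𝕜 Y]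
    (β : ReasonableCrossnorm 𝕜 X) (c : 𝕜) (u : (⨂[𝕜] i, X i) ⊗[𝕜] Y),
    tn β (c • u) = ‖c‖ * tn β u
  /-- S1. -/
  S1 : ∀ {ι : Type} [Fintype ι] [Nonempty ι] {X : ι → Type u}
    [∀ i, NormedAddCommGroup (X i)] [∀ i, NormedSpace 𝕜 (X i)] [∀ i, FiniteDimensional 𝕜 (X i)]
    {Y : Type u} [NormedAddCommGroup Y] [NormedSpace 𝕜 Y] [FiniteDimensional 𝕜 Y]
    (β : ReasonableCrossnorm 𝕜 X), ∀ p ∈ Segre 𝕜 X, ∀ q ∈ Segre 𝕜 X, ∀ y : Y,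
    tn β ((p - q) ⊗ₜ[𝕜] y) ≤ β.toFun (p - q) * ‖y‖
  /-- S2. -/
  S2 : ∀ {ι : Type} [Fintype ι] [Nonempty ι] {X : ι → Type u}
    [∀ i, NormedAddCommGroup (X i)] [∀ i, NormedSpace 𝕜 (X i)] [∀ i, FiniteDimensional 𝕜 (X i)]
    {Y : Type u} [NormedAddCommGroup Y] [NormedSpace 𝕜 Y] [FiniteDimensional 𝕜 Y]
    (β : ReasonableCrossnorm 𝕜 X) (φ : (⨂[𝕜] i, X i) →ₗ[𝕜] 𝕜) (C : ℝ), 0 ≤ C →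
    (∀ w, ‖φ w‖ ≤ C * β.toFun w) → ∀ (g : Y →L[𝕜] 𝕜) (u : (⨂[𝕜] i, X i) ⊗[𝕜] Y),
    ‖funcSY φ g u‖ ≤ C * ‖g‖ * tn β u
  /-- S3: the uniform property. -/
  S3 : ∀ {ι κ : Type} [Fintype ι] [Nonempty ι] [Fintype κ] [Nonempty κ]
    {X : ι → Type u} [∀ i, NormedAddCommGroup (X i)] [∀ i, NormedSpace 𝕜 (X i)] [∀ i, FiniteDimensional 𝕜 (X i)]
    {Z : κ → Type u} [∀ j, NormedAddCommGroup (Z j)] [∀ j, NormedSpace 𝕜 (Z j)] [∀ j, FiniteDimensional 𝕜 (Z j)]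
    {Y W : Type u} [NormedAddCommGroup Y] [NormedSpace 𝕜 Y] [FiniteDimensional 𝕜 Y]
    [NormedAddCommGroup W] [NormedSpace 𝕜 W] [FiniteDimensional 𝕜 W]
    (β : ReasonableCrossnorm 𝕜 X) (θ : ReasonableCrossnorm 𝕜 Z)
    (R : (⨂[𝕜] j, Z j) →ₗ[𝕜] (⨂[𝕜] i, X i)) (CR : ℝ), 0 ≤ CR →
    (∀ v, β.toFun (R v) ≤ CR * θ.toFun v) →
    (∀ p ∈ Segre 𝕜 Z, R p ∈ Segre 𝕜 X) →
    ∀ (S : W →L[𝕜] Y) (u : (⨂[𝕜] j, Z j) ⊗[𝕜] W),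
    tn β (TensorProduct.map R S.toLinearMap u) ≤ CR * ‖S‖ * tn θ u

/-- A Σ-tensor norm on duals (Definition 4.2): an assignment, to each election, of a
norm on `𝓛^β(X₁,…,Xₙ) ⊗ Y` satisfying D1, D2 and the uniform property D3 with respect
to Σ-preserving operators. -/
structure SigmaTensorNormOnDualsFin where
  tn : ∀ {ι : Type} [Fintype ι] [Nonempty ι] {X : ι → Type u}
    [∀ i, NormedAddCommGroup (X i)] [∀ i, NormedSpace 𝕜 (X i)] [∀ i, FiniteDimensional 𝕜 (X i)]
    {Y : Type u} [NormedAddCommGroup Y] [NormedSpace 𝕜 Y] [FiniteDimensional 𝕜 Y]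
    (β : ReasonableCrossnorm 𝕜 X), ((BetaDual β) ⊗[𝕜] Y) → ℝ
  tn_add_le : ∀ {ι : Type} [Fintype ι] [Nonempty ι] {X : ι → Type u}
    [∀ i, NormedAddCommGroup (X i)] [∀ i, NormedSpace 𝕜 (X i)] [∀ i, FiniteDimensional 𝕜 (X i)]
    {Y : Type u} [NormedAddCommGroup Y] [NormedSpace 𝕜 Y] [FiniteDimensional 𝕜 Y]
    (β : ReasonableCrossnorm 𝕜 X) (v w : (BetaDual β) ⊗[𝕜] Y),
    tn β (v + w) ≤ tn β v + tn β w
  tn_smul : ∀ {ι : Type} [Fintype ι] [Nonempty ι] {X : ι → Type u}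
    [∀ i, NormedAddCommGroup (X i)] [∀ i, NormedSpace 𝕜 (X i)] [∀ i, FiniteDimensional 𝕜 (X i)]
    {Y : Type u} [NormedAddCommGroup Y] [NormedSpace 𝕜 Y] [FiniteDimensional 𝕜 Y]
    (β : ReasonableCrossnorm 𝕜 X) (c : 𝕜) (v : (BetaDual β) ⊗[𝕜] Y),
    tn β (c • v) = ‖c‖ * tn β v
  /-- D1. -/
  D1 : ∀ {ι : Type} [Fintype ι] [Nonempty ι] {X : ι → Type u}
    [∀ i, NormedAddCommGroup (X i)] [∀ i, NormedSpace 𝕜 (X i)] [∀ i, FiniteDimensional 𝕜 (X i)]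
    {Y : Type u} [NormedAddCommGroup Y] [NormedSpace 𝕜 Y] [FiniteDimensional 𝕜 Y]
    (β : ReasonableCrossnorm 𝕜 X) (f : BetaDual β) (C : ℝ), 0 ≤ C →
    (∀ u, ‖f.1 u‖ ≤ C * β.toFun u) → ∀ y : Y, tn β (f ⊗ₜ[𝕜] y) ≤ C * ‖y‖
  /-- D2. -/
  D2 : ∀ {ι : Type} [Fintype ι] [Nonempty ι] {X : ι → Type u}
    [∀ i, NormedAddCommGroup (X i)] [∀ i, NormedSpace 𝕜 (X i)] [∀ i, FiniteDimensional 𝕜 (X i)]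
    {Y : Type u} [NormedAddCommGroup Y] [NormedSpace 𝕜 Y] [FiniteDimensional 𝕜 Y]
    (β : ReasonableCrossnorm 𝕜 X), ∀ p ∈ Segre 𝕜 X, ∀ q ∈ Segre 𝕜 X,
    ∀ (g : Y →L[𝕜] 𝕜) (v : (BetaDual β) ⊗[𝕜] Y),
    ‖evalLD β v ((p - q) ⊗ₜ[𝕜] g)‖ ≤ β.toFun (p - q) * ‖g‖ * tn β v
  /-- D3: the uniform property with respect to Σ-preserving operators. -/
  D3 : ∀ {ι κ : Type} [Fintype ι] [Nonempty ι] [Fintype κ] [Nonempty κ]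
    {X : ι → Type u} [∀ i, NormedAddCommGroup (X i)] [∀ i, NormedSpace 𝕜 (X i)] [∀ i, FiniteDimensional 𝕜 (X i)]
    {Z : κ → Type u} [∀ j, NormedAddCommGroup (Z j)] [∀ j, NormedSpace 𝕜 (Z j)] [∀ j, FiniteDimensional 𝕜 (Z j)]
    {Y W : Type u} [NormedAddCommGroup Y] [NormedSpace 𝕜 Y] [FiniteDimensional 𝕜 Y]
    [NormedAddCommGroup W] [NormedSpace 𝕜 W] [FiniteDimensional 𝕜 W]
    (β : ReasonableCrossnorm 𝕜 X) (θ : ReasonableCrossnorm 𝕜 Z)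
    (A : (BetaDual β) →ₗ[𝕜] (BetaDual θ)) (CA : ℝ), 0 ≤ CA →
    (∀ (f : BetaDual β) (C : ℝ), 0 ≤ C → (∀ u, ‖f.1 u‖ ≤ C * β.toFun u) →
      ∀ w, ‖(A f).1 w‖ ≤ CA * C * θ.toFun w) →
    (∀ q ∈ Segre 𝕜 Z, ∃ p ∈ Segre 𝕜 X, ∀ f : BetaDual β, (A f).1 q = f.1 p) →
    ∀ (B : Y →L[𝕜] W) (v : (BetaDual β) ⊗[𝕜] Y),
    tn θ (TensorProduct.map A B.toLinearMap v) ≤ CA * ‖B‖ * tn β v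

end StructuresFin
section Predicates

variable {𝕜 : Type u} [RCLike 𝕜]

/-- Maximality of a Σ-ideal (Definition 3.2):
`A^β(T) = sup A^{β|}(Q_L f_T I_{E₁,…,Eₙ})` over finite dimensional subspaces
`Eᵢ ⊂ Xᵢ` and finite codimensional closed subspaces `L ⊂ Y`. -/
def SigmaIdeal.IsMaximal (I : SigmaIdeal 𝕜) : Prop :=
  ∀ {ι : Type} [Fintype ι] [Nonempty ι] {X : ι → Type u}
    [∀ i, NormedAddCommGroup (X i)] [∀ i, NormedSpace 𝕜 (X i)]
    [∀ i, CompleteSpace (X i)]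
    {Y : Type u} [NormedAddCommGroup Y] [NormedSpace 𝕜 Y] [CompleteSpace Y]
    (β : ReasonableCrossnorm 𝕜 X) (T : MultilinearMap 𝕜 X Y), I.Mem β T →
    I.anorm β T = sSup {r | ∃ (E : ∀ i, Submodule 𝕜 (X i))
      (_ : ∀ i, FiniteDimensional 𝕜 (E i)) (L : Submodule 𝕜 Y)
      (hL : IsClosed (L : Set Y)) (_ : FiniteDimensional 𝕜 (Y ⧸ L)),
      I.Mem (β.restrict E) (smallOp hL T E) ∧
        r = I.anorm (β.restrict E) (smallOp hL T E)}

/-- A Σ-tensor norm on spaces is finitely generated (Definition 4.3):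
`α^β(u; X, Y) = inf α^{β|}(u; E, F)` over finite dimensional subspaces containing `u`. -/
def SigmaTensorNormOnSpaces.IsFinitelyGenerated (α : SigmaTensorNormOnSpaces 𝕜) : Prop :=
  ∀ {ι : Type} [Fintype ι] [Nonempty ι] {X : ι → Type u}
    [∀ i, NormedAddCommGroup (X i)] [∀ i, NormedSpace 𝕜 (X i)]
    {Y : Type u} [NormedAddCommGroup Y] [NormedSpace 𝕜 Y]
    (β : ReasonableCrossnorm 𝕜 X) (u : (⨂[𝕜] i, X i) ⊗[𝕜] Y),
    α.tn β u = sInf {r | ∃ (E : ∀ i, Submodule 𝕜 (X i))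
      (_ : ∀ i, FiniteDimensional 𝕜 (E i)) (F : Submodule 𝕜 Y)
      (_ : FiniteDimensional 𝕜 F) (u₀ : (⨂[𝕜] i, (E i : Type u)) ⊗[𝕜] F),
      TensorProduct.map (PiTensorProduct.map fun i => (E i).subtype) F.subtype u₀ = u ∧
        r = α.tn (β.restrict E) u₀}

/-- A Σ-tensor norm on duals is cofinitely generated (Definition 4.5):
`ν^β(v) = sup ν^{β|}(R_{E₁,…,Eₙ} ⊗ Q_L (v))` over finite dimensional subspaces
`Eᵢ ⊂ Xᵢ` and finite codimensional closed subspaces `L ⊂ Y`. -/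
def SigmaTensorNormOnDuals.IsCofinitelyGenerated (ν : SigmaTensorNormOnDuals 𝕜) : Prop :=
  ∀ {ι : Type} [Fintype ι] [Nonempty ι] {X : ι → Type u}
    [∀ i, NormedAddCommGroup (X i)] [∀ i, NormedSpace 𝕜 (X i)]
    {Y : Type u} [NormedAddCommGroup Y] [NormedSpace 𝕜 Y]
    (β : ReasonableCrossnorm 𝕜 X) (v : (BetaDual β) ⊗[𝕜] Y),
    ν.tn β v = sSup {r | ∃ (E : ∀ i, Submodule 𝕜 (X i))
      (_ : ∀ i, FiniteDimensional 𝕜 (E i)) (L : Submodule 𝕜 Y)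
      (hL : IsClosed (L : Set Y)) (_ : FiniteDimensional 𝕜 (Y ⧸ L)),
      r = ν.tn (β.restrict E)
        (TensorProduct.map (restrictDual β E) L.mkQ v)}

end Predicates

/- `ε_β(v)` is the least constant `c` with `|⟨v, (p - q) ⊗ y*⟩| ≤ c β(p - q) ‖y*‖` on
differences of Segre points: both sides are homogeneous in `p - q` and in `y*`, and a
crude bound valid for every `v` disposes of the degenerate case `β(p - q) ‖y*‖ = 0`.
Such a bound on elementary pieces passes to all of `X₁⊗⋯⊗Xₙ⊗Y*` with `π^β` on the right,
since `π^β` is the infimum of `Σ β(pᵢ - qᵢ) ‖yᵢ*‖` over decompositions into such pieces;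
conversely `π^β((p - q) ⊗ y*) ≤ β(p - q) ‖y*‖`, so no smaller constant works. -/

section CrossnormBasics

variable {𝕜 : Type u} [RCLike 𝕜] {ι : Type} [Fintype ι] [Nonempty ι]
    {X : ι → Type u} [∀ i, NormedAddCommGroup (X i)] [∀ i, NormedSpace 𝕜 (X i)]

theorem zero_mem_Segre : (0 : ⨂[𝕜] i, X i) ∈ Segre 𝕜 X :=
  ⟨0, (MultilinearMap.map_coord_zero _ (Classical.arbitrary ι) rfl).symm⟩

theorem smul_mem_Segre (c : 𝕜) {p : ⨂[𝕜] i, X i} (hp : p ∈ Segre 𝕜 X) :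
    c • p ∈ Segre 𝕜 X := by
  classical
  obtain ⟨x, rfl⟩ := hp
  refine ⟨Function.update x (Classical.arbitrary ι) (c • x (Classical.arbitrary ι)), ?_⟩
  rw [MultilinearMap.map_update_smul, Function.update_eq_self]

theorem ReasonableCrossnorm.toFun_nonneg (β : ReasonableCrossnorm 𝕜 X)
    (w : ⨂[𝕜] i, X i) : 0 ≤ β.toFun w :=
  (epsSeminorm_nonneg w).trans (β.inj_le' w)

end CrossnormBasics

theorem closure_segre_tmul_eq_top {𝕜 : Type u} [RCLike 𝕜] {ι : Type} [Fintype ι]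
    {X : ι → Type u} [∀ i, NormedAddCommGroup (X i)] [∀ i, NormedSpace 𝕜 (X i)]
    {Y : Type u} [AddCommGroup Y] [Module 𝕜 Y] :
    AddSubmonoid.closure {u : (⨂[𝕜] i, X i) ⊗[𝕜] Y | ∃ p ∈ Segre 𝕜 X, ∃ y, u = p ⊗ₜ y} =
      ⊤ := by
  refine (AddSubmonoid.eq_top_iff' _).2 fun u => ?_
  induction u using TensorProduct.induction_on with
  | zero => exact zero_mem _
  | add u v hu hv => exact add_mem hu hv
  | tmul w y =>
    induction w using PiTensorProduct.induction_on with
    | smul_tprod c x =>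
      exact AddSubmonoid.subset_closure ⟨_, ⟨x, rfl⟩, c • y, TensorProduct.smul_tmul _ _ _⟩
    | add w w' hw hw' => rw [TensorProduct.add_tmul]; exact add_mem hw hw'

section PiBetaS

variable {𝕜 : Type u} [RCLike 𝕜] {ι : Type} [Fintype ι] [Nonempty ι]
    {X : ι → Type u} [∀ i, NormedAddCommGroup (X i)] [∀ i, NormedSpace 𝕜 (X i)]
    {Y : Type u} [NormedAddCommGroup Y] [NormedSpace 𝕜 Y]

theorem exists_sum_segre_sub_tmul (u : (⨂[𝕜] i, X i) ⊗[𝕜] Y) :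
    ∃ (m : ℕ) (p q : Fin m → ⨂[𝕜] i, X i) (y : Fin m → Y),
      (∀ k, p k ∈ Segre 𝕜 X ∧ q k ∈ Segre 𝕜 X) ∧ u = ∑ k, (p k - q k) ⊗ₜ[𝕜] y k := by
  obtain ⟨l, hl, rfl⟩ := AddSubmonoid.exists_list_of_mem_closure
    ((AddSubmonoid.eq_top_iff' _).1 closure_segre_tmul_eq_top u)
  choose p hp y hy using fun k : Fin l.length => hl _ (List.getElem_mem k.isLt)
  refine ⟨l.length, p, 0, y, fun k => ⟨hp k, zero_mem_Segre⟩, ?_⟩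
  simp only [Pi.zero_apply, sub_zero, ← hy, Fin.sum_univ_getElem]

theorem piBetaS_tmul_le (β : ReasonableCrossnorm 𝕜 X) {p q : ⨂[𝕜] i, X i}
    (hp : p ∈ Segre 𝕜 X) (hq : q ∈ Segre 𝕜 X) (y : Y) :
    piBetaS β ((p - q) ⊗ₜ[𝕜] y) ≤ β.toFun (p - q) * ‖y‖ := by
  refine csInf_le ⟨0, ?_⟩ ⟨1, fun _ => p, fun _ => q, fun _ => y, fun _ => ⟨hp, hq⟩,
    by simp, by simp⟩
  rintro _ ⟨m, p', q', y', -, -, rfl⟩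
  exact Finset.sum_nonneg fun k _ => mul_nonneg (β.toFun_nonneg _) (norm_nonneg _)

theorem norm_le_mul_piBetaS {F : Type*} [SeminormedAddCommGroup F] [Module 𝕜 F]
    (β : ReasonableCrossnorm 𝕜 X) (L : ((⨂[𝕜] i, X i) ⊗[𝕜] Y) →ₗ[𝕜] F) {C : ℝ}
    (hC : 0 ≤ C) (hL : ∀ p ∈ Segre 𝕜 X, ∀ q ∈ Segre 𝕜 X, ∀ y : Y,
      ‖L ((p - q) ⊗ₜ[𝕜] y)‖ ≤ C * (β.toFun (p - q) * ‖y‖))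
    (u : (⨂[𝕜] i, X i) ⊗[𝕜] Y) : ‖L u‖ ≤ C * piBetaS β u := by
  obtain ⟨m, p, q, y, hpq, hu⟩ := exists_sum_segre_sub_tmul u
  rw [piBetaS, ← smul_eq_mul, ← Real.sInf_smul_of_nonneg hC]
  refine le_csInf ⟨_, Set.smul_mem_smul_set ⟨m, p, q, y, hpq, hu, rfl⟩⟩ ?_
  rintro _ ⟨_, ⟨m, p, q, y, hpq, rfl, rfl⟩, rfl⟩
  simp only [smul_eq_mul, map_sum, Finset.mul_sum]
  exact (norm_sum_le _ _).trans (Finset.sum_le_sum fun k _ => hL _ (hpq k).1 _ (hpq k).2 _)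

end PiBetaS

section EpsBetaD

variable {𝕜 : Type u} [RCLike 𝕜] {ι : Type} [Fintype ι] [Nonempty ι]
    {X : ι → Type u} [∀ i, NormedAddCommGroup (X i)] [∀ i, NormedSpace 𝕜 (X i)]
    {Y : Type u} [NormedAddCommGroup Y] [NormedSpace 𝕜 Y]

theorem evalLD_tmul_tmul (β : ReasonableCrossnorm 𝕜 X) (f : BetaDual β) (y : Y)
    (w : ⨂[𝕜] i, X i) (g : Y →L[𝕜] 𝕜) :
    evalLD β (f ⊗ₜ[𝕜] y) (w ⊗ₜ[𝕜] g) = f.1 w * g y := by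
  simp [evalLD, evalCLM]

theorem exists_norm_evalLD_tmul_le (β : ReasonableCrossnorm 𝕜 X) (v : (BetaDual β) ⊗[𝕜] Y) :
    ∃ C, 0 ≤ C ∧ ∀ (w : ⨂[𝕜] i, X i) (g : Y →L[𝕜] 𝕜),
      ‖evalLD β v (w ⊗ₜ[𝕜] g)‖ ≤ C * (β.toFun w * ‖g‖) := by
  induction v using TensorProduct.induction_on with
  | zero => exact ⟨0, le_rfl, by simp⟩
  | tmul f y =>
    obtain ⟨C, hC0, hC⟩ := f.2
    refine ⟨C * ‖y‖, mul_nonneg hC0 (norm_nonneg _), fun w g => ?_⟩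
    rw [evalLD_tmul_tmul, norm_mul]
    calc ‖f.1 w‖ * ‖g y‖ ≤ (C * β.toFun w) * (‖g‖ * ‖y‖) :=
          mul_le_mul (hC w) (g.le_opNorm y) (norm_nonneg _)
            (mul_nonneg hC0 (β.toFun_nonneg w))
      _ = C * ‖y‖ * (β.toFun w * ‖g‖) := by ring
  | add v₁ v₂ h₁ h₂ =>
    obtain ⟨C₁, hC₁0, hC₁⟩ := h₁
    obtain ⟨C₂, hC₂0, hC₂⟩ := h₂
    refine ⟨C₁ + C₂, add_nonneg hC₁0 hC₂0, fun w g => ?_⟩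
    rw [map_add, LinearMap.add_apply, add_mul]
    exact (norm_add_le _ _).trans (add_le_add (hC₁ w g) (hC₂ w g))

theorem epsBetaD_nonneg (β : ReasonableCrossnorm 𝕜 X) (v : (BetaDual β) ⊗[𝕜] Y) :
    0 ≤ epsBetaD β v :=
  Real.sSup_nonneg (by rintro _ ⟨p, -, q, -, g, -, -, rfl⟩; exact norm_nonneg _)

theorem norm_evalLD_le_epsBetaD_mul (β : ReasonableCrossnorm 𝕜 X) (v : (BetaDual β) ⊗[𝕜] Y)
    {p q : ⨂[𝕜] i, X i} (hp : p ∈ Segre 𝕜 X) (hq : q ∈ Segre 𝕜 X) (g : Y →L[𝕜] 𝕜) :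
    ‖evalLD β v ((p - q) ⊗ₜ[𝕜] g)‖ ≤ epsBetaD β v * (β.toFun (p - q) * ‖g‖) := by
  obtain ⟨C, hC0, hC⟩ := exists_norm_evalLD_tmul_le β v
  have hbdd : BddAbove {r | ∃ p ∈ Segre 𝕜 X, ∃ q ∈ Segre 𝕜 X, ∃ g : Y →L[𝕜] 𝕜,
      β.toFun (p - q) ≤ 1 ∧ ‖g‖ ≤ 1 ∧ r = ‖evalLD β v ((p - q) ⊗ₜ[𝕜] g)‖} := by
    refine ⟨C, ?_⟩
    rintro _ ⟨p, -, q, -, g, hβ, hg, rfl⟩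
    exact (hC _ g).trans (mul_le_of_le_one_right hC0 (mul_le_one₀ hβ (norm_nonneg g) hg))
  set a := β.toFun (p - q)
  rcases (β.toFun_nonneg (p - q)).eq_or_lt with ha | ha
  · simpa [a, ← ha] using hC (p - q) g
  rcases (norm_nonneg g).eq_or_lt with hg | hg
  · simpa [← hg] using hC (p - q) g
  -- rescale `p - q` and `g` to the unit spheres of `β` and of `Y*`
  set s : 𝕜 := ((a⁻¹ : ℝ) : 𝕜)
  set t : 𝕜 := ((‖g‖⁻¹ : ℝ) : 𝕜)
  have hs : ‖s‖ = a⁻¹ := by rw [RCLike.norm_ofReal, abs_inv, abs_of_pos ha]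
  have ht : ‖t‖ = ‖g‖⁻¹ := by simp [t]
  have hmem := le_csSup hbdd ⟨s • p, smul_mem_Segre s hp, s • q, smul_mem_Segre s hq, t • g,
    by rw [← smul_sub, β.smul', hs, inv_mul_cancel₀ ha.ne'],
    by rw [norm_smul, ht, inv_mul_cancel₀ hg.ne'], rfl⟩
  rw [← smul_sub, ← TensorProduct.smul_tmul', TensorProduct.tmul_smul, map_smul, map_smul,
    norm_smul, norm_smul, hs, ht] at hmem
  rw [← div_le_iff₀ (mul_pos ha hg)]
  calc ‖evalLD β v ((p - q) ⊗ₜ[𝕜] g)‖ / (a * ‖g‖)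
      = a⁻¹ * (‖g‖⁻¹ * ‖evalLD β v ((p - q) ⊗ₜ[𝕜] g)‖) := by field_simp
    _ ≤ epsBetaD β v := hmem

theorem epsBetaD_le_of_forall_norm_evalLD_le (β : ReasonableCrossnorm 𝕜 X)
    (v : (BetaDual β) ⊗[𝕜] Y) {C : ℝ} (hC : 0 ≤ C)
    (h : ∀ u, ‖evalLD β v u‖ ≤ C * piBetaS β u) : epsBetaD β v ≤ C := by
  refine Real.sSup_le ?_ hC
  rintro _ ⟨p, hp, q, hq, g, hβ, hg, rfl⟩
  calc ‖evalLD β v ((p - q) ⊗ₜ[𝕜] g)‖ ≤ C * piBetaS β ((p - q) ⊗ₜ[𝕜] g) := h _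
    _ ≤ C * (β.toFun (p - q) * ‖g‖) := mul_le_mul_of_nonneg_left (piBetaS_tmul_le β hp hq g) hC
    _ ≤ C := mul_le_of_le_one_right hC (mul_le_one₀ hβ (norm_nonneg g) hg)

end EpsBetaD

theorem epsBetaD_dual_to_piBetaS_general
    {𝕜 : Type u} [RCLike 𝕜]
    {ι : Type} [Fintype ι] [Nonempty ι]
    {X : ι → Type u} [∀ i, NormedAddCommGroup (X i)] [∀ i, NormedSpace 𝕜 (X i)]
    {Y : Type u} [NormedAddCommGroup Y] [NormedSpace 𝕜 Y]
    (β : ReasonableCrossnorm 𝕜 X) (v : (BetaDual β) ⊗[𝕜] Y) :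
    epsBetaD β v = sInf {C | 0 ≤ C ∧ ∀ u : (⨂[𝕜] i, X i) ⊗[𝕜] (Y →L[𝕜] 𝕜),
      ‖evalLD β v u‖ ≤ C * piBetaS β u} := by
  have hmem : epsBetaD β v ∈ {C | 0 ≤ C ∧ ∀ u : (⨂[𝕜] i, X i) ⊗[𝕜] (Y →L[𝕜] 𝕜),
      ‖evalLD β v u‖ ≤ C * piBetaS β u} :=
    ⟨epsBetaD_nonneg β v, norm_le_mul_piBetaS β (evalLD β v) (epsBetaD_nonneg β v)
      fun _ hp _ hq g => norm_evalLD_le_epsBetaD_mul β v hp hq g⟩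
  refine le_antisymm ?_ (csInf_le ⟨0, fun _ hC => hC.1⟩ hmem)
  exact le_csInf ⟨_, hmem⟩ fun C hC => epsBetaD_le_of_forall_norm_evalLD_le β v hC.1 hC.2

/-- `(𝓛^β(X₁,…,Xₙ)⊗Y, ε_β)` embeds isometrically, via evaluation, into
`(X₁⊗⋯⊗Xₙ⊗Y*, π^β)*`; i.e. `ε_β` is the dual norm of `π^β`. -/
theorem epsBetaD_dual_to_piBetaS
    {𝕜 : Type u} [RCLike 𝕜]
    {ι : Type} [Fintype ι] [Nonempty ι]
    {X : ι → Type u} [∀ i, NormedAddCommGroup (X i)] [∀ i, NormedSpace 𝕜 (X i)]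
    [∀ i, CompleteSpace (X i)]
    {Y : Type u} [NormedAddCommGroup Y] [NormedSpace 𝕜 Y] [CompleteSpace Y]
    (β : ReasonableCrossnorm 𝕜 X) (v : (BetaDual β) ⊗[𝕜] Y) :
    epsBetaD β v = sInf {C | 0 ≤ C ∧ ∀ u : (⨂[𝕜] i, X i) ⊗[𝕜] (Y →L[𝕜] 𝕜),
      ‖evalLD β v u‖ ≤ C * piBetaS β u} :=
  epsBetaD_dual_to_piBetaS_general β v
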